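/- Partial diffusion monotonicity: if two partial diffusion schemes (F^α_n, H^α_n) and (F^{α'}_n, H^{α'}_n) start from the same F_0 ≥ 0 and H_0 = 0, use the same index sequence I, and satisfy 0 ≤ α_n ≤ α'_n ≤ 1 for all n, then for all n: H^{α'}_n ≥ H^α_n entrywise and H^{α'}_n + F^{α'}_n ≥ H^α_n + F^α_n entrywise (no condition on ρ(P) needed, only P ≥ 0). -/

import Mathlib

/-! Both schemes obey the conservation law `F_n = F₀ + (P - 1) H_n`. Hence, with `D = H' - H`,
`F - F' = D - P D ≤ D` as long as `D ≥ 0`, because `P ≥ 0`. A step at index `i` moves only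
coordinate `i`, by `α F(i)` in one scheme and `α' F'(i)` in the other, and `F' ≥ 0` since every
`P^α_i` is entrywise nonnegative for `0 ≤ α ≤ 1`; with `α ≤ 1` these give `D ≥ 0` at the next step.
Finally `H + F = F₀ + P H` is monotone in `H`. -/

open Matrix

section

variable {m n R : Type*}

lemma mulVec_nonneg [Semiring R] [PartialOrder R] [IsOrderedRing R] [Fintype m]
    {A : Matrix n m R} (hA : ∀ i j, 0 ≤ A i j) {v : m → R} (hv : 0 ≤ v) : 0 ≤ A *ᵥ v :=
  fun i => dotProduct_nonneg_of_nonneg (hA i) hv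

variable [Fintype n] [DecidableEq n]

def partialDiffusion [CommRing R] (P : Matrix n n R) (a : R) (i : n) : Matrix n n R :=
  1 + a • ((P - 1) * single i i 1)

lemma partialDiffusion_mulVec [CommRing R] (P : Matrix n n R) (a : R) (i : n) (v : n → R) :
    partialDiffusion P a i *ᵥ v = v + (P - 1) *ᵥ (a • (single i i 1 *ᵥ v)) := by
  rw [partialDiffusion, add_mulVec, one_mulVec, smul_mulVec, ← mulVec_mulVec, mulVec_smul]

lemma partialDiffusion_conservation [CommRing R] {P : Matrix n n R} {a : ℕ → R} {ι : ℕ → n}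
    {F H : ℕ → n → R} (hF : ∀ k, F (k + 1) = partialDiffusion P (a k) (ι k) *ᵥ F k)
    (hH : ∀ k, H (k + 1) = H k + a k • (single (ι k) (ι k) 1 *ᵥ F k)) (hH0 : H 0 = 0) :
    ∀ k, F k = F 0 + (P - 1) *ᵥ H k := by
  intro k
  induction k with
  | zero => simp [hH0]
  | succ k ih => rw [hF, partialDiffusion_mulVec, hH, mulVec_add, ← add_assoc, ← ih]

variable [CommRing R] [PartialOrder R] [IsOrderedRing R] {P : Matrix n n R}

lemma partialDiffusion_nonneg (hP : ∀ i j, 0 ≤ P i j) {a : R} (ha0 : 0 ≤ a) (ha1 : a ≤ 1)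
    (i : n) : ∀ j k, 0 ≤ partialDiffusion P a i j k := by
  intro j k
  have hone : 0 ≤ (1 : Matrix n n R) j k := by
    rw [one_apply]; split_ifs <;> simp
  rcases eq_or_ne k i with rfl | hk
  · have hcol : partialDiffusion P a k j k = (1 - a) * (1 : Matrix n n R) j k + a * P j k := by
      simp only [partialDiffusion, Matrix.add_apply, Matrix.smul_apply, mul_single_apply_same,
        Matrix.sub_apply, smul_eq_mul, mul_one]
      ring
    rw [hcol]
    exact add_nonneg (mul_nonneg (sub_nonneg.2 ha1) hone) (mul_nonneg ha0 (hP j k))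
  · have hcol : partialDiffusion P a i j k = (1 : Matrix n n R) j k := by
      simp [partialDiffusion, mul_single_apply_of_ne _ _ _ _ _ hk]
    exact hcol ▸ hone

lemma partialDiffusion_iterate_nonneg (hP : ∀ i j, 0 ≤ P i j) {a : ℕ → R}
    (ha0 : ∀ k, 0 ≤ a k) (ha1 : ∀ k, a k ≤ 1) {ι : ℕ → n} {F : ℕ → n → R} (hF0 : 0 ≤ F 0)
    (hF : ∀ k, F (k + 1) = partialDiffusion P (a k) (ι k) *ᵥ F k) : ∀ k, 0 ≤ F k := by
  intro k
  induction k with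
  | zero => exact hF0
  | succ k ih => rw [hF]; exact mulVec_nonneg (partialDiffusion_nonneg hP (ha0 k) (ha1 k) _) ih

variable (F₀ : n → R) {H H' : n → R}

lemma sub_conservation_le_sub (hP : ∀ i j, 0 ≤ P i j) (hHH' : H ≤ H') :
    (F₀ + (P - 1) *ᵥ H) - (F₀ + (P - 1) *ᵥ H') ≤ H' - H := by
  have hPD : 0 ≤ P *ᵥ (H' - H) := mulVec_nonneg hP (sub_nonneg.2 hHH')
  have : (F₀ + (P - 1) *ᵥ H) - (F₀ + (P - 1) *ᵥ H') = (H' - H) - P *ᵥ (H' - H) := by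
    simp only [sub_mulVec, one_mulVec, mulVec_sub]; abel
  rw [this]
  exact sub_le_self _ hPD

lemma add_conservation_le_add (hP : ∀ i j, 0 ≤ P i j) (hHH' : H ≤ H') :
    H + (F₀ + (P - 1) *ᵥ H) ≤ H' + (F₀ + (P - 1) *ᵥ H') := by
  have hPD : 0 ≤ P *ᵥ (H' - H) := mulVec_nonneg hP (sub_nonneg.2 hHH')
  have : H' + (F₀ + (P - 1) *ᵥ H') - (H + (F₀ + (P - 1) *ᵥ H)) = P *ᵥ (H' - H) := by
    simp only [sub_mulVec, one_mulVec, mulVec_sub]; abel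
  exact sub_nonneg.1 (this ▸ hPD)

lemma add_smul_single_mulVec_le {F F' : n → R} (hHH' : H ≤ H') (hFF' : F - F' ≤ H' - H)
    (hF' : 0 ≤ F') {a a' : R} (ha0 : 0 ≤ a) (haa' : a ≤ a') (ha1 : a ≤ 1) (i : n) :
    H + a • (single i i 1 *ᵥ F) ≤ H' + a' • (single i i 1 *ᵥ F') := by
  intro j
  rcases eq_or_ne j i with rfl | hj
  · have hF := hFF' j
    simp only [Pi.add_apply, Pi.sub_apply, Pi.smul_apply, single_mulVec, Function.update_self,
      smul_eq_mul, one_mul] at hF ⊢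
    calc H j + a * F j = H j + a * F' j + a * (F j - F' j) := by ring
      _ ≤ H j + a' * F' j + 1 * (H' j - H j) := by
        gcongr _ + ?_ + ?_
        · exact mul_le_mul_of_nonneg_right haa' (hF' j)
        · exact (mul_le_mul_of_nonneg_left hF ha0).trans
            (mul_le_mul_of_nonneg_right ha1 (sub_nonneg.2 (hHH' j)))
      _ = H' j + a' * F' j := by ring
  · simpa [single_mulVec, hj] using hHH' j

end

/-- partial diffusion monotonicity: if the two schemes start from the same
`F_0 ≥ 0`, use the same index sequence, and `0 ≤ α_n ≤ α'_n ≤ 1`, then for all `n`,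
`H^{α'}_n ≥ H^α_n` and `H^{α'}_n + F^{α'}_n ≥ H^α_n + F^α_n` entrywise. -/
theorem partial_diffusion_monotone {N : ℕ} (P : Matrix (Fin N) (Fin N) ℝ)
    (F₀ : Fin N → ℝ) (hPpos : ∀ i j, 0 ≤ P i j) (hF₀ : ∀ i, 0 ≤ F₀ i)
    (α α' : ℕ → ℝ) (hα0 : ∀ n, 0 ≤ α n) (hαα' : ∀ n, α n ≤ α' n) (hα'1 : ∀ n, α' n ≤ 1)
    (ι : ℕ → Fin N) (F F' H H' : ℕ → Fin N → ℝ)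
    (hF0 : F 0 = F₀) (hF'0 : F' 0 = F₀) (hH0 : H 0 = 0) (hH'0 : H' 0 = 0)
    (hF : ∀ n, F (n + 1) =
      (1 + α n • ((P - 1) * Matrix.single (ι n) (ι n) 1)) *ᵥ F n)
    (hF' : ∀ n, F' (n + 1) =
      (1 + α' n • ((P - 1) * Matrix.single (ι n) (ι n) 1)) *ᵥ F' n)
    (hH : ∀ n, H (n + 1) = H n + α n • (Matrix.single (ι n) (ι n) 1 *ᵥ F n))
    (hH' : ∀ n, H' (n + 1) = H' n + α' n • (Matrix.single (ι n) (ι n) 1 *ᵥ F' n)) :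
    ∀ n i, H n i ≤ H' n i ∧ H n i + F n i ≤ H' n i + F' n i := by
  have hcons : ∀ k, F k = F₀ + (P - 1) *ᵥ H k := hF0 ▸ partialDiffusion_conservation hF hH hH0
  have hcons' : ∀ k, F' k = F₀ + (P - 1) *ᵥ H' k :=
    hF'0 ▸ partialDiffusion_conservation hF' hH' hH'0
  have hF'_nonneg : ∀ k, 0 ≤ F' k := partialDiffusion_iterate_nonneg hPpos
    (fun k => (hα0 k).trans (hαα' k)) hα'1 (hF'0 ▸ hF₀) hF'
  have hHH' : ∀ k, H k ≤ H' k := by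
    intro k
    induction k with
    | zero => rw [hH0, hH'0]
    | succ k ih =>
      rw [hH, hH']
      refine add_smul_single_mulVec_le ih ?_ (hF'_nonneg k) (hα0 k) (hαα' k)
        ((hαα' k).trans (hα'1 k)) _
      rw [hcons, hcons']
      exact sub_conservation_le_sub F₀ hPpos ih
  intro k i
  refine ⟨hHH' k i, ?_⟩
  rw [hcons, hcons']
  exact add_conservation_le_add F₀ hPpos (hHH' k) i
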